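/- arXiv:1802.03441 — 2 statements merged into one kernel-verified Lean document; each statement's English description precedes it below -/
import Mathlib

section
/- Under standard randomized response with parameter 0 < ε < 1 (so g_xᵀ p = ρ + γ·p(x) with ρ = 1/(T−1+e^ε), γ = (e^ε−1)/(T−1+e^ε)), the log-loss f(p) = −(1/n)∑_{x∈X} n_x·log(ρ + γ·p(x)) restricted to the probability simplex is (ε²/9 · min_x{n_x}/n)-strongly convex, i.e., its Hessian satisfies ∇²f ⪰ (ε²/9)·(min_x n_x)/n · I on the simplex. -/
/-!
Since `p(x) ≤ 1`, `ρ + γ p(x) ≤ ρ + γ`, so the curvature factor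
`γ / (ρ + γ p(x))` is at least `γ / (ρ + γ) = 1 - e^{-ε}`, which is at least `ε / 3` for `ε ≤ 2`.
Squaring and bounding `n_x` below by `min n_x` gives the diagonal Hessian entry-wise lower bound.
-/

open Real Finset

theorem Matrix.posSemidef_diagonal_sub_smul_one {ι R : Type*} [Fintype ι] [DecidableEq ι]
    [CommRing R] [PartialOrder R] [StarRing R] [StarOrderedRing R] {d : ι → R} {c : R}
    (h : ∀ i, c ≤ d i) : (diagonal d - c • (1 : Matrix ι ι R)).PosSemidef := by
  rw [smul_one_eq_diagonal, diagonal_sub, posSemidef_diagonal_iff]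
  exact fun i => sub_nonneg.mpr (h i)

lemma div_three_le_one_sub_exp_neg {ε : ℝ} (hε : 0 ≤ ε) (hε2 : ε ≤ 2) :
    ε / 3 ≤ 1 - exp (-ε) := by
  rw [exp_neg, inv_eq_one_div, le_sub_comm, div_le_iff₀ (exp_pos ε)]
  nlinarith [mul_le_mul_of_nonneg_left (add_one_le_exp ε) (by linarith : 0 ≤ 1 - ε / 3)]

lemma div_three_le_randomizedResponse_gain {T ε p : ℝ} (hT : 1 ≤ T) (hε : 0 ≤ ε) (hε2 : ε ≤ 2)
    (hp0 : 0 ≤ p) (hp1 : p ≤ 1) :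
    ε / 3 ≤ (exp ε - 1) / (T - 1 + exp ε) /
      (1 / (T - 1 + exp ε) + (exp ε - 1) / (T - 1 + exp ε) * p) := by
  have hexp : 1 ≤ exp ε := one_le_exp hε
  have hD : 0 < T - 1 + exp ε := by linarith
  have hsimp : (exp ε - 1) / (T - 1 + exp ε) /
      (1 / (T - 1 + exp ε) + (exp ε - 1) / (T - 1 + exp ε) * p) =
      (exp ε - 1) / (1 + (exp ε - 1) * p) := by
    field_simp
  have hworst : (exp ε - 1) / (1 + (exp ε - 1)) ≤ (exp ε - 1) / (1 + (exp ε - 1) * p) :=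
    div_le_div_of_nonneg_left (by linarith) (by nlinarith) (by nlinarith)
  calc ε / 3 ≤ 1 - exp (-ε) := div_three_le_one_sub_exp_neg hε hε2
    _ = (exp ε - 1) / (1 + (exp ε - 1)) := by rw [exp_neg]; field_simp; ring
    _ ≤ _ := hworst
    _ = _ := hsimp.symm

theorem log_loss_strongly_convex_RR_general {X : Type*} [Fintype X] [DecidableEq X] [Nonempty X]
    (ε : ℝ) (hε : 0 < ε) (hε1 : ε < 1)
    (nx : X → ℝ) (hnx : ∀ x, 0 ≤ nx x) (n : ℝ) (hn : 0 < n)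
    (p : X → ℝ) (hp : ∀ x, 0 ≤ p x ∧ p x ≤ 1) :
    let T : ℝ := Fintype.card X
    let ρ := 1 / (T - 1 + Real.exp ε)
    let γ := (Real.exp ε - 1) / (T - 1 + Real.exp ε)
    (Matrix.diagonal (fun x => γ ^ 2 * nx x / (n * (ρ + γ * p x) ^ 2)) -
      ((ε ^ 2 / 9) * (Finset.univ.inf' Finset.univ_nonempty nx) / n) •
        (1 : Matrix X X ℝ)).PosSemidef := by
  intro T ρ γ
  refine Matrix.posSemidef_diagonal_sub_smul_one fun x => ?_
  have hT : (1 : ℝ) ≤ T := Nat.one_le_cast.mpr Fintype.card_pos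
  have hgain : ε / 3 ≤ γ / (ρ + γ * p x) :=
    div_three_le_randomizedResponse_gain hT hε.le (by linarith) (hp x).1 (hp x).2
  obtain ⟨y, -, hy⟩ := exists_mem_eq_inf' univ_nonempty nx
  have hmin : univ.inf' univ_nonempty nx ≤ nx x := inf'_le nx (mem_univ x)
  calc ε ^ 2 / 9 * univ.inf' univ_nonempty nx / n
      = (ε / 3) ^ 2 * univ.inf' univ_nonempty nx / n := by ring
    _ ≤ (γ / (ρ + γ * p x)) ^ 2 * nx x / n := by
      gcongr
      rw [hy]; exact hnx y
    _ = γ ^ 2 * nx x / (n * (ρ + γ * p x) ^ 2) := by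
      rw [div_pow, div_mul_eq_mul_div, div_div, mul_comm n]

theorem log_loss_strongly_convex_RR {X : Type*} [Fintype X] [DecidableEq X] [Nonempty X]
    (ε : ℝ) (hε : 0 < ε) (hε1 : ε < 1)
    (nx : X → ℝ) (hnx : ∀ x, 0 ≤ nx x) (n : ℝ) (hn : 0 < n) (hnsum : ∑ x, nx x = n)
    (p : X → ℝ) (hp : ∀ x, 0 ≤ p x ∧ p x ≤ 1) (hpsum : ∑ x, p x = 1) :
    let T : ℝ := Fintype.card X
    let ρ := 1 / (T - 1 + Real.exp ε)
    let γ := (Real.exp ε - 1) / (T - 1 + Real.exp ε)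
    (Matrix.diagonal (fun x => γ ^ 2 * nx x / (n * (ρ + γ * p x) ^ 2)) -
      ((ε ^ 2 / 9) * (Finset.univ.inf' Finset.univ_nonempty nx) / n) •
        (1 : Matrix X X ℝ)).PosSemidef :=
  log_loss_strongly_convex_RR_general ε hε hε1 nx hnx n hn p hp
end

section
/- Let θ = (1/n)∑_{i=1}^n (1/η)(g_i^{y_i} − (1/2)𝟙) be the estimator from n independent runs of the non-symmetric mechanism on users with fixed types x₁,...,x_n, and let f = (1/n)∑_i e_{x_i} be the frequency vector. Then E[θ] = 2η·f and E[(θ − 2ηf)(θ − 2ηf)ᵀ] ⪯ (1/n)·I; consequently E[‖θ − 2ηf‖²] ≤ T/n where T = |X|. -/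
/-!
Write one run of the mechanism as `ω = (b, s)` and its normalized report as
`χ(b x) χ(s)` with `χ = ±1`. Since the characters `b ↦ χ(b x)` are orthonormal for the uniform
distribution on `X → Bool`, a user of type `t` produces a report with mean `2η e_t` and second
moment matrix `I`, hence covariance `I - 4η² e_t e_tᵀ`. The users are independent, so the
covariance of the average `θ` is `(1/n) I - (4η²/n²) ∑ᵢ e_{xᵢ} e_{xᵢ}ᵀ ⪯ (1/n) I`, and taking
traces bounds the mean squared error by `|X|/n`.
-/

open Finset

section ProductWeights

variable {ι A : Type*} [Fintype ι] [DecidableEq ι] [Fintype A] {v : ι → A → ℝ}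

theorem sum_prod_mul_apply (hv : ∀ k, ∑ a, v k a = 1) (i : ι) (F : A → ℝ) :
    ∑ ω : ι → A, (∏ k, v k (ω k)) * F (ω i) = ∑ a, v i a * F a := by
  have hsplit (ω : ι → A) : (∏ k, v k (ω k)) * F (ω i) =
      ∏ k, v k (ω k) * if k = i then F (ω k) else 1 := by
    rw [prod_mul_distrib, prod_ite_eq' univ i, if_pos (mem_univ i)]
  simp only [hsplit, ← Fintype.prod_sum fun k a => v k a * if k = i then F a else 1]
  rw [prod_eq_single i (fun k _ hk => by simp [hk, hv k]) (by simp)]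
  simp

theorem sum_prod_mul_apply_mul_apply_of_ne (hv : ∀ k, ∑ a, v k a = 1) {i j : ι} (hij : i ≠ j)
    (F G : A → ℝ) :
    ∑ ω : ι → A, (∏ k, v k (ω k)) * (F (ω i) * G (ω j)) =
      (∑ a, v i a * F a) * ∑ a, v j a * G a := by
  have hsplit (ω : ι → A) : (∏ k, v k (ω k)) * (F (ω i) * G (ω j)) =
      ∏ k, v k (ω k) * (if k = i then F (ω k) else 1) * if k = j then G (ω k) else 1 := by
    rw [prod_mul_distrib, prod_mul_distrib, prod_ite_eq' univ i, prod_ite_eq' univ j,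
      if_pos (mem_univ i), if_pos (mem_univ j), mul_assoc]
  simp only [hsplit, ← Fintype.prod_sum fun k a =>
    v k a * (if k = i then F a else 1) * if k = j then G a else 1]
  rw [Fintype.prod_eq_mul i j hij fun k ⟨hki, hkj⟩ => by simp [hki, hkj, hv k]]
  simp [hij, hij.symm]

theorem sum_prod_mul_sum (hv : ∀ k, ∑ a, v k a = 1) (F : ι → A → ℝ) :
    ∑ ω : ι → A, (∏ k, v k (ω k)) * ∑ i, F i (ω i) = ∑ i, ∑ a, v i a * F i a := by
  simp only [mul_sum]
  rw [sum_comm]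
  exact sum_congr rfl fun i _ => sum_prod_mul_apply hv i (F i)

theorem sum_prod_mul_sum_mul_sum (hv : ∀ k, ∑ a, v k a = 1) (F G : ι → A → ℝ)
    (hF : ∀ i, ∑ a, v i a * F i a = 0) :
    ∑ ω : ι → A, (∏ k, v k (ω k)) * ((∑ i, F i (ω i)) * ∑ j, G j (ω j)) =
      ∑ i, ∑ a, v i a * (F i a * G i a) := by
  simp_rw [sum_mul_sum, mul_sum]
  rw [sum_comm]
  refine sum_congr rfl fun i _ => ?_
  rw [sum_comm, sum_eq_single i (fun j _ hji => by
    rw [sum_prod_mul_apply_mul_apply_of_ne hv (Ne.symm hji), hF, zero_mul]) (by simp)]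
  exact sum_prod_mul_apply hv i fun a => F i a * G i a

end ProductWeights

noncomputable def boolSign (c : Bool) : ℝ := if c then 1 else -1

@[simp] theorem boolSign_true : boolSign true = 1 := rfl

@[simp] theorem boolSign_false : boolSign false = -1 := rfl

@[simp] theorem boolSign_mul_self (c : Bool) : boolSign c * boolSign c = 1 := by
  cases c <;> simp

section SingleUser

variable {X : Type*} [Fintype X] [DecidableEq X] (η : ℝ)

theorem sum_boolSign_mul_boolSign (x y : X) :
    ∑ b : X → Bool, (1 / 2 : ℝ) ^ Fintype.card X * (boolSign (b x) * boolSign (b y)) =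
      if x = y then 1 else 0 := by
  have huniform : ∀ _ : X, ∑ _ : Bool, (1 / 2 : ℝ) = 1 := fun _ => by norm_num
  split_ifs with hxy
  · subst hxy
    simp
  · have hpow : (1 / 2 : ℝ) ^ Fintype.card X = ∏ _ : X, (1 / 2 : ℝ) := by simp
    rw [hpow, sum_prod_mul_apply_mul_apply_of_ne huniform hxy boolSign boolSign]
    simp

/- A run is `ω = (b, s)`: the uniformly random `b` fixes the row `g¹ = 1/2 ± η` (sign `χ(b x)`),
and `s` says whether the user reports `g¹` or `g⁰ = 1 - g¹`. `bassilyReport ω` is the normalized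
report `(1/η)(g^s - 1/2)`, and `bassilyWeight η t` is the law of `ω` for a user of type `t`. -/
noncomputable def bassilyReport (ω : (X → Bool) × Bool) (x : X) : ℝ :=
  boolSign (ω.1 x) * boolSign ω.2

noncomputable def bassilyWeight (t : X) (ω : (X → Bool) × Bool) : ℝ :=
  (1 / 2) ^ Fintype.card X * (1 / 2 + η * bassilyReport ω t)

noncomputable def bassilyNoise (t : X) (ω : (X → Bool) × Bool) (x : X) : ℝ :=
  bassilyReport ω x - 2 * η * Pi.basisFun ℝ X t x

theorem sum_bassilyWeight_mul (t : X) (φ : (X → Bool) × Bool → ℝ) :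
    ∑ ω, bassilyWeight η t ω * φ ω = ∑ b : X → Bool, (1 / 2 : ℝ) ^ Fintype.card X *
      ((φ (b, true) + φ (b, false)) / 2 + η * boolSign (b t) * (φ (b, true) - φ (b, false))) := by
  rw [Fintype.sum_prod_type]
  refine sum_congr rfl fun b _ => ?_
  simp [bassilyWeight, bassilyReport]
  ring

theorem sum_bassilyWeight (t : X) : ∑ ω, bassilyWeight η t ω = 1 := by
  simpa using sum_bassilyWeight_mul η t fun _ => 1

theorem sum_bassilyWeight_mul_bassilyReport (t x : X) :
    ∑ ω, bassilyWeight η t ω * bassilyReport ω x = 2 * η * Pi.basisFun ℝ X t x := by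
  rw [sum_bassilyWeight_mul, Pi.basisFun_apply, Pi.single_apply, eq_comm,
    ← sum_boolSign_mul_boolSign, mul_sum]
  refine sum_congr rfl fun b _ => ?_
  simp [bassilyReport]
  ring

theorem sum_bassilyWeight_mul_bassilyReport_mul_bassilyReport (t x y : X) :
    ∑ ω, bassilyWeight η t ω * (bassilyReport ω x * bassilyReport ω y) =
      if x = y then 1 else 0 := by
  rw [sum_bassilyWeight_mul, ← sum_boolSign_mul_boolSign]
  refine sum_congr rfl fun b _ => ?_
  simp [bassilyReport]

theorem sum_bassilyWeight_mul_bassilyNoise (t x : X) :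
    ∑ ω, bassilyWeight η t ω * bassilyNoise η t ω x = 0 := by
  simp only [bassilyNoise, mul_sub, sum_sub_distrib, ← sum_mul,
    sum_bassilyWeight_mul_bassilyReport, sum_bassilyWeight]
  ring

theorem sum_bassilyWeight_mul_bassilyNoise_mul_bassilyNoise (t x y : X) :
    ∑ ω, bassilyWeight η t ω * (bassilyNoise η t ω x * bassilyNoise η t ω y) =
      (if x = y then 1 else 0) - 4 * η ^ 2 * (Pi.basisFun ℝ X t x * Pi.basisFun ℝ X t y) := by
  set ex := Pi.basisFun ℝ X t x
  set ey := Pi.basisFun ℝ X t y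
  have hexpand (ω : (X → Bool) × Bool) :
      bassilyWeight η t ω * (bassilyNoise η t ω x * bassilyNoise η t ω y) =
        bassilyWeight η t ω * (bassilyReport ω x * bassilyReport ω y)
          - 2 * η * ey * (bassilyWeight η t ω * bassilyReport ω x)
          - 2 * η * ex * (bassilyWeight η t ω * bassilyReport ω y)
          + 4 * η ^ 2 * (ex * ey) * bassilyWeight η t ω := by
    simp only [bassilyNoise]
    ring
  simp only [hexpand, sum_add_distrib, sum_sub_distrib, ← mul_sum,
    sum_bassilyWeight_mul_bassilyReport_mul_bassilyReport, sum_bassilyWeight_mul_bassilyReport,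
    sum_bassilyWeight]
  ring

end SingleUser

section Estimator

variable {X ι : Type*} [Fintype X] [DecidableEq X] [Fintype ι] [DecidableEq ι]
  (η : ℝ) (xt : ι → X)

noncomputable def bassilyEstimator (ω : ι → (X → Bool) × Bool) (x : X) : ℝ :=
  1 / Fintype.card ι * ∑ i, bassilyReport (ω i) x

noncomputable def typeFrequency (x : X) : ℝ :=
  1 / Fintype.card ι * ∑ i, Pi.basisFun ℝ X (xt i) x

noncomputable def bassilyCovariance : Matrix X X ℝ :=
  Matrix.of fun x y => ∑ ω, (∏ i, bassilyWeight η (xt i) (ω i)) *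
    ((bassilyEstimator ω x - 2 * η * typeFrequency xt x) *
      (bassilyEstimator ω y - 2 * η * typeFrequency xt y))

theorem sum_prod_bassilyWeight_mul_bassilyEstimator (x : X) :
    ∑ ω, (∏ i, bassilyWeight η (xt i) (ω i)) * bassilyEstimator ω x =
      2 * η * typeFrequency xt x := by
  have hmean := sum_prod_mul_sum (fun k => sum_bassilyWeight η (xt k))
    fun _ a => bassilyReport a x
  simp only [sum_bassilyWeight_mul_bassilyReport] at hmean
  simp only [bassilyEstimator, typeFrequency, mul_left_comm _ (1 / _ : ℝ), ← mul_sum, hmean]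

theorem bassilyCovariance_eq :
    bassilyCovariance η xt = (1 / Fintype.card ι : ℝ) • 1 - (4 * η ^ 2 / Fintype.card ι ^ 2) •
      ∑ i, Matrix.vecMulVec (Pi.basisFun ℝ X (xt i)) (Pi.basisFun ℝ X (xt i)) := by
  have hdev (ω : ι → (X → Bool) × Bool) (x : X) :
      bassilyEstimator ω x - 2 * η * typeFrequency xt x =
        1 / Fintype.card ι * ∑ i, bassilyNoise η (xt i) (ω i) x := by
    simp only [bassilyEstimator, typeFrequency, bassilyNoise, sum_sub_distrib, ← mul_sum]
    ring
  ext x y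
  have hcov := sum_prod_mul_sum_mul_sum (fun k => sum_bassilyWeight η (xt k))
    (fun i a => bassilyNoise η (xt i) a x) (fun i a => bassilyNoise η (xt i) a y)
    (fun i => sum_bassilyWeight_mul_bassilyNoise η (xt i) x)
  simp only [sum_bassilyWeight_mul_bassilyNoise_mul_bassilyNoise] at hcov
  simp only [bassilyCovariance, Matrix.of_apply, hdev, mul_mul_mul_comm (1 / _ : ℝ),
    mul_left_comm _ (1 / _ * (1 / _) : ℝ), ← mul_sum, hcov]
  simp only [Matrix.sub_apply, Matrix.smul_apply, Matrix.one_apply, Matrix.sum_apply,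
    Matrix.vecMulVec_apply, sum_sub_distrib, ← mul_sum, sum_const, card_univ, smul_eq_mul,
    nsmul_eq_mul]
  have hcard : 1 / (Fintype.card ι : ℝ) * (1 / Fintype.card ι) * Fintype.card ι =
      1 / Fintype.card ι := by
    simpa using mul_self_mul_inv (Fintype.card ι : ℝ)⁻¹
  linear_combination (if x = y then 1 else 0 : ℝ) * hcard

theorem posSemidef_sub_bassilyCovariance :
    ((1 / Fintype.card ι : ℝ) • 1 - bassilyCovariance η xt).PosSemidef := by
  rw [bassilyCovariance_eq, sub_sub_cancel]
  refine .smul (Matrix.posSemidef_sum _ fun i _ => ?_) (by positivity)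
  simpa using Matrix.posSemidef_vecMulVec_self_star (Pi.basisFun ℝ X (xt i))

theorem sum_prod_bassilyWeight_mul_sum_sq_le :
    ∑ ω, (∏ i, bassilyWeight η (xt i) (ω i)) *
      ∑ x, (bassilyEstimator ω x - 2 * η * typeFrequency xt x) ^ 2 ≤
      Fintype.card X / Fintype.card ι := by
  have htrace := (posSemidef_sub_bassilyCovariance η xt).trace_nonneg
  rw [Matrix.trace_sub, Matrix.trace_smul, Matrix.trace_one, sub_nonneg] at htrace
  calc _ = ∑ x, bassilyCovariance η xt x x := by
        simp only [bassilyCovariance, Matrix.of_apply, mul_sum, sq]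
        exact sum_comm
    _ ≤ (1 / Fintype.card ι : ℝ) • (Fintype.card X : ℝ) := htrace
    _ = Fintype.card X / Fintype.card ι := by rw [smul_eq_mul, one_div_mul_eq_div]

end Estimator

theorem bassily_estimator_moments_general {X : Type*} [Fintype X] [DecidableEq X]
    (η : ℝ) (hη0 : 0 < η)
    (n : ℕ) (xt : Fin n → X) :
    let g : (X → Bool) → X → ℝ := fun b x => if b x then 1 / 2 + η else 1 / 2 - η
    let row : (X → Bool) × Bool → X → ℝ := fun ω x =>
      if ω.2 then g ω.1 x else 1 - g ω.1 x
    let w : X → (X → Bool) × Bool → ℝ := fun t ω =>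
      (1 / 2) ^ (Fintype.card X) * (if ω.2 then g ω.1 t else 1 - g ω.1 t)
    let W : (Fin n → (X → Bool) × Bool) → ℝ := fun ω => ∏ i, w (xt i) (ω i)
    let θ : (Fin n → (X → Bool) × Bool) → X → ℝ := fun ω x =>
      (1 / n) * ∑ i, (1 / η) * (row (ω i) x - 1 / 2)
    let f : X → ℝ := fun x => ((Finset.univ.filter (fun i => xt i = x)).card : ℝ) / n
    (∀ x, ∑ ω, W ω * θ ω x = 2 * η * f x) ∧
    ((((1 : ℝ) / n) • (1 : Matrix X X ℝ) -
      Matrix.of (fun x x' =>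
        ∑ ω, W ω * ((θ ω x - 2 * η * f x) * (θ ω x' - 2 * η * f x')))).PosSemidef) ∧
    (∑ ω, W ω * ∑ x, (θ ω x - 2 * η * f x) ^ 2 ≤ (Fintype.card X : ℝ) / n) := by
  intro g row w W θ f
  have hW (ω : Fin n → (X → Bool) × Bool) : W ω = ∏ i, bassilyWeight η (xt i) (ω i) := by
    refine prod_congr rfl fun i _ => ?_
    obtain ⟨b, s⟩ := ω i
    cases s <;> cases hb : b (xt i) <;> simp [w, g, bassilyWeight, bassilyReport, hb] <;> ring
  have hθ (ω : Fin n → (X → Bool) × Bool) (x : X) : θ ω x = bassilyEstimator ω x := by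
    simp only [θ, bassilyEstimator, Fintype.card_fin]
    congr 1
    refine sum_congr rfl fun i _ => ?_
    obtain ⟨b, s⟩ := ω i
    cases s <;> cases hb : b x <;> simp [row, g, bassilyReport, hb] <;> field_simp <;> ring
  have hf (x : X) : f x = typeFrequency xt x := by
    simp only [f, typeFrequency, Fintype.card_fin, Pi.basisFun_apply, Pi.single_apply,
      sum_boole, eq_comm (a := x)]
    ring
  simp only [hW, hθ, hf]
  refine ⟨sum_prod_bassilyWeight_mul_bassilyEstimator η xt, ?_, ?_⟩
  · simpa only [Fintype.card_fin, bassilyCovariance] using posSemidef_sub_bassilyCovariance η xt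
  · simpa only [Fintype.card_fin] using sum_prod_bassilyWeight_mul_sum_sq_le η xt

theorem bassily_estimator_moments {X : Type*} [Fintype X] [DecidableEq X]
    (η : ℝ) (hη0 : 0 < η) (hη : η < 1 / 2)
    (n : ℕ) (hn : 0 < n) (xt : Fin n → X) :
    let g : (X → Bool) → X → ℝ := fun b x => if b x then 1 / 2 + η else 1 / 2 - η
    let row : (X → Bool) × Bool → X → ℝ := fun ω x =>
      if ω.2 then g ω.1 x else 1 - g ω.1 x
    let w : X → (X → Bool) × Bool → ℝ := fun t ω =>
      (1 / 2) ^ (Fintype.card X) * (if ω.2 then g ω.1 t else 1 - g ω.1 t)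
    let W : (Fin n → (X → Bool) × Bool) → ℝ := fun ω => ∏ i, w (xt i) (ω i)
    let θ : (Fin n → (X → Bool) × Bool) → X → ℝ := fun ω x =>
      (1 / n) * ∑ i, (1 / η) * (row (ω i) x - 1 / 2)
    let f : X → ℝ := fun x => ((Finset.univ.filter (fun i => xt i = x)).card : ℝ) / n
    (∀ x, ∑ ω, W ω * θ ω x = 2 * η * f x) ∧
    ((((1 : ℝ) / n) • (1 : Matrix X X ℝ) -
      Matrix.of (fun x x' =>
        ∑ ω, W ω * ((θ ω x - 2 * η * f x) * (θ ω x' - 2 * η * f x')))).PosSemidef) ∧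
    (∑ ω, W ω * ∑ x, (θ ω x - 2 * η * f x) ^ 2 ≤ (Fintype.card X : ℝ) / n) :=
  bassily_estimator_moments_general η hη0 n xt
end
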